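/- arXiv:math/0304419 — 5 statements merged into one kernel-verified Lean document; each statement's English description precedes it below -/
import Mathlib

section
/- There exists a constant c > 0 such that for all r ∈ (0, 1/2) and all θ, φ ∈ (0, π), one has | 2·sin(φ)·((1/r − r)·sin(θ)) / (π·| −r·e^{iθ} − (1/r)·e^{−iθ} + 2·cos(φ) |²) − (2/π)·r·sin(θ)·sin(φ) | ≤ c·r²·sin(θ)·sin(φ). -/
open Real Complex

lemma key_nonneg (r t u : ℝ) (hr : 0 < r) (hr2 : r ≤ 1/2) (ht0 : 0 ≤ t) (ht : t ≤ 1)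
    (hu : u^2 ≤ 1) :
    1/16 ≤ (2*u*r - (1+r^2)*t)^2 + (1-r^2)^2*(1-t^2) := by
  rcases le_or_gt ((1+r^2)*t) (2*r) with h | h
  · have h0 : 0 ≤ (1+r^2)*t := by positivity
    have h1 : (1+r^2)^2*t^2 ≤ 4*r^2 := by nlinarith
    have h2 : (1-r^2)^2 ≤ (1+r^2)^2*(1-t^2) := by nlinarith
    have h4 : (1-r^2)^2*(1-r^2)^2 ≤ (1+r^2)^2*((1-r^2)^2*(1-t^2)) := by nlinarith [sq_nonneg (1-r^2)]
    have hx : r^2 ≤ 1/4 := by nlinarith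
    have hA : (9/16:ℝ) ≤ (1-r^2)^2 := by nlinarith
    have hB : (81/256:ℝ) ≤ (1-r^2)^2*(1-r^2)^2 := by nlinarith
    have hC : (1/16)*(1+r^2)^2 ≤ 25/256 := by nlinarith
    have h5 : (0:ℝ) < (1+r^2)^2 := by positivity
    nlinarith [sq_nonneg (2*u*r - (1+r^2)*t)]
  · have hu1 : u ≤ 1 := by nlinarith [sq_nonneg (u-1)]
    have hX : 2*u*r - (1+r^2)*t ≤ -((1+r^2)*t - 2*r) := by nlinarith
    have hX2 : ((1+r^2)*t - 2*r)^2 ≤ (2*u*r - (1+r^2)*t)^2 := by nlinarith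
    nlinarith [mul_nonneg (mul_nonneg hr.le (sub_nonneg.2 ht)) (by nlinarith [sq_nonneg (1-r)] : (0:ℝ) ≤ 1 + r^2 - r*(1+t)), sq_nonneg (1-2*r), sq_nonneg (1-r)]

lemma key (r t u : ℝ) (hr : 0 < r) (hr2 : r ≤ 1/2) (ht : t^2 ≤ 1) (hu : u^2 ≤ 1) :
    1/16 ≤ (2*u*r - (1+r^2)*t)^2 + (1-r^2)^2*(1-t^2) := by
  have ht1 : -1 ≤ t := by nlinarith [sq_nonneg (t+1)]
  have ht1' : t ≤ 1 := by nlinarith [sq_nonneg (t-1)]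
  rcases le_or_gt 0 t with h | h
  · exact key_nonneg r t u hr hr2 h ht1' hu
  · have := key_nonneg r (-t) (-u) hr hr2 (by linarith) (by linarith) (by nlinarith)
    nlinarith [this]

lemma qbound (r t u : ℝ) (hr : 0 < r) (hr2 : r ≤ 1/2) (ht : t^2 ≤ 1) (hu : u^2 ≤ 1) :
    |1 - r^2 - ((2*u*r - (1+r^2)*t)^2 + (1-r^2)^2*(1-t^2))| ≤ 10*r := by
  have hut1 : u*t ≤ 1 := by nlinarith [sq_nonneg (u-t)]
  have hut2 : -1 ≤ u*t := by nlinarith [sq_nonneg (u+t)]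
  have hrr : r^2 ≤ r/2 := by nlinarith
  rw [abs_le]
  constructor <;> nlinarith [sq_nonneg r, mul_nonneg (mul_nonneg hr.le hr.le) hr.le,
    mul_le_mul_of_nonneg_left hrr hr.le]

set_option maxHeartbeats 1000000 in
/-- Estimate for the Poisson kernel of the upper half-disk `D⁺`
(Lemma `apr3.lemma1`, estimate (C) in Lawler–Werner, "The Brownian loop soup"):
`| H_{D⁺}(r e^{iθ}, e^{iφ}) − (2/π) r sin θ sin φ | ≤ c r² sin θ sin φ`. -/
theorem bubble_poisson_kernel_half_disk_estimate :
    ∃ c : ℝ, 0 < c ∧ ∀ r θ φ : ℝ, r ∈ Set.Ioo (0 : ℝ) (1/2) →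
      θ ∈ Set.Ioo (0 : ℝ) π → φ ∈ Set.Ioo (0 : ℝ) π →
      |2 * Real.sin φ * ((1/r - r) * Real.sin θ) /
          (π * (‖(-(r : ℂ) * Complex.exp (θ * Complex.I)
            - (1/(r : ℂ)) * Complex.exp (-θ * Complex.I) + 2 * Real.cos φ)‖)^2)
        - (2/π) * r * Real.sin θ * Real.sin φ|
      ≤ c * r^2 * Real.sin θ * Real.sin φ := by
  refine ⟨200, by norm_num, ?_⟩
  rintro r θ φ ⟨hr0, hr2⟩ ⟨hθ0, hθπ⟩ ⟨hφ0, hφπ⟩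
  have hr2' : r ≤ 1/2 := hr2.le
  have hst : 0 < Real.sin θ := Real.sin_pos_of_pos_of_lt_pi hθ0 hθπ
  have hsφ : 0 < Real.sin φ := Real.sin_pos_of_pos_of_lt_pi hφ0 hφπ
  have hπ : (3:ℝ) < π := Real.pi_gt_three
  -- rewrite the complex number
  have hw : (-(r : ℂ) * Complex.exp (θ * Complex.I)
            - (1/(r : ℂ)) * Complex.exp (-θ * Complex.I) + 2 * (Real.cos φ : ℂ))
      = ((2*Real.cos φ - (1/r + r)*Real.cos θ : ℝ) : ℂ)
        + (((1/r - r)*Real.sin θ : ℝ) : ℂ) * Complex.I := by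
    rw [show (-(θ:ℂ)) * Complex.I = ((-θ:ℝ):ℂ) * Complex.I by push_cast; ring]
    rw [Complex.exp_mul_I, Complex.exp_mul_I]
    push_cast [Real.cos_neg, Real.sin_neg, Complex.cos_neg, Complex.sin_neg]
    field_simp
    ring
  have habs : (‖(-(r : ℂ) * Complex.exp (θ * Complex.I)
            - (1/(r : ℂ)) * Complex.exp (-θ * Complex.I) + 2 * (Real.cos φ : ℂ))‖)^2
      = (2*Real.cos φ - (1/r + r)*Real.cos θ)^2 + ((1/r - r)*Real.sin θ)^2 := by
    rw [hw, Complex.sq_norm, Complex.normSq_add_mul_I]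
  rw [habs]
  set t := Real.cos θ with htdef
  set u := Real.cos φ with hudef
  have ht2 : t^2 ≤ 1 := Real.cos_sq_le_one θ
  have hu2 : u^2 ≤ 1 := Real.cos_sq_le_one φ
  have hsq : Real.sin θ ^ 2 = 1 - t^2 := Real.sin_sq θ
  set D : ℝ := (2*u - (1/r + r)*t)^2 + ((1/r - r)*Real.sin θ)^2 with hD
  set P : ℝ := (2*u*r - (1+r^2)*t)^2 + (1-r^2)^2*(1-t^2) with hPdef
  have hrne : r ≠ 0 := ne_of_gt hr0
  have hPD : r^2 * D = P := by
    have hs : ((1/r - r)*Real.sin θ)^2 = (1/r - r)^2 * (1 - t^2) := by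
      rw [mul_pow, hsq]
    rw [hD, hPdef, hs]
    field_simp
  have hP16 : 1/16 ≤ P := key r t u hr0 hr2' ht2 hu2
  have hPpos : 0 < P := by linarith
  have hDpos : 0 < D := by nlinarith [sq_nonneg r]
  set Q : ℝ := 1 - r^2 - P with hQdef
  have hQ : |Q| ≤ 10*r := qbound r t u hr0 hr2' ht2 hu2
  have hπpos : 0 < π := by linarith
  have hfactor : 2 * Real.sin φ * ((1/r - r) * Real.sin θ) / (π * D)
        - (2/π) * r * Real.sin θ * Real.sin φ
      = 2 * Real.sin θ * Real.sin φ * (r * Q) / (π * P) := by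
    rw [hQdef, ← hPD]
    field_simp
  rw [hfactor, abs_div, abs_of_pos (by positivity : (0:ℝ) < π * P)]
  rw [div_le_iff₀ (by positivity : (0:ℝ) < π * P)]
  have h1 : |2 * Real.sin θ * Real.sin φ * (r * Q)| = 2 * Real.sin θ * Real.sin φ * r * |Q| := by
    rw [abs_mul, abs_of_pos (by positivity : (0:ℝ) < 2 * Real.sin θ * Real.sin φ), abs_mul,
      abs_of_pos hr0]
    ring
  rw [h1]
  have hone : (1:ℝ) ≤ 10*(π*P) := by nlinarith
  calc 2 * Real.sin θ * Real.sin φ * r * |Q|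
      ≤ 2 * Real.sin θ * Real.sin φ * r * (10*r) :=
        mul_le_mul_of_nonneg_left hQ (by positivity)
    _ = (20*(r^2*(Real.sin θ * Real.sin φ))) * 1 := by ring
    _ ≤ (20*(r^2*(Real.sin θ * Real.sin φ))) * (10*(π*P)) :=
        mul_le_mul_of_nonneg_left hone (by positivity)
    _ = 200 * r ^ 2 * Real.sin θ * Real.sin φ * (π * P) := by ring
end

section
/- There exists a constant c > 0 such that for all r ∈ (0, 1/2) and all θ, φ ∈ (0, π), one has | 2·sin(φ)·((1/r − r)·sin(θ)) / (π·| (1/r)·e^{iθ} + r·e^{−iθ} − 2·cos(φ) |²) − (2/π)·r·sin(θ)·sin(φ) | ≤ c·r²·sin(θ)·sin(φ). -/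
open Real Complex

private lemma bubble_rfacts (r : ℝ) (h0 : 0 < r) (h2 : r < 1/2) :
    r^2 ≤ r/2 ∧ r^3 ≤ r/4 ∧ r^4 ≤ r := by
  have hsq : r^2 ≤ 1/4 := by nlinarith
  have hr2' : r^2 ≤ r/2 := by nlinarith [mul_le_mul_of_nonneg_left h2.le h0.le]
  refine ⟨hr2', by nlinarith [mul_le_mul_of_nonneg_left hsq h0.le],
    by nlinarith [mul_le_mul_of_nonneg_left hsq (sq_nonneg r)]⟩

private lemma bubble_cdfacts (c d : ℝ) (hcle : c ≤ 1) (hcge : -1 ≤ c)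
    (hdle : d ≤ 1) (hdge : -1 ≤ d) : c * d ≤ 1 ∧ -1 ≤ c * d ∧ d^2 ≤ 1 := by
  refine ⟨by nlinarith, by nlinarith, by nlinarith⟩

private lemma bubble_aux (r c d s sφ : ℝ) (hr0 : 0 < r) (hr2 : r < 1/2)
    (hsc : s^2 + c^2 = 1) (hs : 0 < s) (hsφ0 : 0 < sφ)
    (hcle : c ≤ 1) (hcge : -1 ≤ c) (hdle : d ≤ 1) (hdge : -1 ≤ d) :
    |2 * sφ * ((1/r - r) * s) / (π * (((1/r + r) * c - 2*d)^2 + ((1/r - r) * s)^2))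
      - (2/π) * r * s * sφ| ≤ 352 * r^2 * s * sφ := by
  have hrne : r ≠ 0 := ne_of_gt hr0
  have hπ : 0 < π := Real.pi_pos
  have h1π : 1 ≤ π := by linarith [Real.pi_gt_three]
  obtain ⟨hcd1, hcd2, hd2⟩ := bubble_cdfacts c d hcle hcge hdle hdge
  obtain ⟨f6, f4, f7⟩ := bubble_rfacts r hr0 hr2
  have hs2 : s^2 ≤ 1 := by nlinarith [sq_nonneg c]
  set Q : ℝ := ((1+r^2)*c - 2*r*d)^2 + (1-r^2)^2*s^2 with hQdef
  clear_value Q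
  have hQid : Q = (1-r)^4 + 4*r*(1-r)^2*(1-c*d) + 4*r^2*(c-d)^2 := by
    linear_combination hQdef + (1-r^2)^2 * hsc
  have h116 : (1/16 : ℝ) ≤ (1-r)^4 := by
    have h12 : (1/2 : ℝ) ≤ 1 - r := by linarith
    calc (1/16 : ℝ) = (1/2 : ℝ)^4 := by norm_num
      _ ≤ (1-r)^4 := pow_le_pow_left₀ (by norm_num) h12 4
  have hQ16 : (1:ℝ)/16 ≤ Q := by
    rw [hQid]
    have t1 : 0 ≤ 4*r*(1-r)^2*(1-c*d) :=
      mul_nonneg (mul_nonneg (by linarith) (sq_nonneg (1-r))) (by linarith)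
    have t2 : 0 ≤ 4*r^2*(c-d)^2 := by positivity
    linarith
  have hQpos : 0 < Q := by linarith
  have hQ' : Q = (1+r^2)^2 - 4*r^2*s^2 - 4*r*(1+r^2)*(c*d) + 4*r^2*d^2 := by
    linear_combination hQdef + (1+r^2)^2 * hsc
  have hXY : ((1/r + r) * c - 2*d)^2 + ((1/r - r) * s)^2 = Q / r^2 := by
    rw [hQdef]; field_simp
  rw [hXY]
  have hA_eq : 2*sφ*((1/r-r)*s)/(π*(Q/r^2)) - (2/π)*r*s*sφ
      = (2*s*sφ*r/π) * ((1 - r^2 - Q)/Q) := by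
    field_simp
  rw [hA_eq, abs_mul, abs_div, abs_div, abs_of_pos hQpos, abs_of_pos hπ,
    abs_of_pos (by positivity : (0:ℝ) < 2*s*sφ*r)]
  have f1 : r^2*s^2 ≤ r^2 := by simpa using mul_le_mul_of_nonneg_left hs2 (sq_nonneg r)
  have f2 : r*(c*d) ≤ r := by simpa using mul_le_mul_of_nonneg_left hcd1 hr0.le
  have f2' : -r ≤ r*(c*d) := by simpa using mul_le_mul_of_nonneg_left hcd2 hr0.le
  have f3 : r^3*(c*d) ≤ r^3 := by
    simpa using mul_le_mul_of_nonneg_left hcd1 (by positivity : (0:ℝ) ≤ r^3)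
  have f3' : -r^3 ≤ r^3*(c*d) := by
    simpa using mul_le_mul_of_nonneg_left hcd2 (by positivity : (0:ℝ) ≤ r^3)
  have f5 : r^2*d^2 ≤ r^2 := by simpa using mul_le_mul_of_nonneg_left hd2 (sq_nonneg r)
  have f5' : 0 ≤ r^2*d^2 := by positivity
  have f8 : 0 ≤ r^2*s^2 := by positivity
  have f9 : (0:ℝ) ≤ r^4 := by positivity
  have f10 : (0:ℝ) ≤ r^3 := by positivity
  have f11 : (0:ℝ) ≤ r^2 := by positivity
  have hD : |1 - r^2 - Q| ≤ 11*r := by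
    rw [abs_le, hQ']
    constructor <;> linarith
  have hdivD : |1 - r^2 - Q| / Q ≤ 176 * r := by
    calc |1 - r^2 - Q| / Q ≤ (11*r) / (1/16) :=
          div_le_div₀ (by positivity) hD (by norm_num) hQ16
      _ = 176 * r := by ring
  calc 2*s*sφ*r/π * (|1 - r^2 - Q| / Q)
      ≤ 2*s*sφ*r/π * (176 * r) := mul_le_mul_of_nonneg_left hdivD (by positivity)
    _ = (352*r^2*s*sφ)/π := by ring
    _ ≤ 352 * r^2 * s * sφ := div_le_self (by positivity) h1π

/-- Estimate for the Poisson kernel of `ℍ ∖ closure(D⁺)`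
(Lemma `apr3.lemma1`, estimate (A) in Lawler–Werner, "The Brownian loop soup"):
`| H_{ℍ∖D⁺}(r⁻¹ e^{iθ}, e^{iφ}) − (2/π) r sin θ sin φ | ≤ c r² sin θ sin φ`. -/
theorem bubble_poisson_kernel_exterior_half_disk_estimate :
    ∃ c : ℝ, 0 < c ∧ ∀ r θ φ : ℝ, r ∈ Set.Ioo (0 : ℝ) (1/2) →
      θ ∈ Set.Ioo (0 : ℝ) π → φ ∈ Set.Ioo (0 : ℝ) π →
      |2 * Real.sin φ * ((1/r - r) * Real.sin θ) /
          (π * (‖(1/(r : ℂ)) * Complex.exp (θ * Complex.I)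
            + (r : ℂ) * Complex.exp (-θ * Complex.I) - 2 * Real.cos φ‖)^2)
        - (2/π) * r * Real.sin θ * Real.sin φ|
      ≤ c * r^2 * Real.sin θ * Real.sin φ := by
  refine ⟨352, by norm_num, ?_⟩
  intro r θ φ hr hθ hφ
  have hE : ((1/(r : ℂ)) * Complex.exp (↑θ * Complex.I)
      + (r : ℂ) * Complex.exp (-↑θ * Complex.I) - 2 * (Real.cos φ : ℂ))
      = (((1/r + r) * Real.cos θ - 2*Real.cos φ : ℝ) : ℂ)
        + (((1/r - r) * Real.sin θ : ℝ) : ℂ) * Complex.I := by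
    simp only [Complex.exp_mul_I, Complex.cos_neg, Complex.sin_neg,
      Complex.ofReal_sub, Complex.ofReal_mul, Complex.ofReal_add, Complex.ofReal_div,
      Complex.ofReal_one, Complex.ofReal_ofNat, Complex.ofReal_cos, Complex.ofReal_sin]
    ring
  rw [hE, Complex.sq_norm, Complex.normSq_add_mul_I]
  exact bubble_aux r (Real.cos θ) (Real.cos φ) (Real.sin θ) (Real.sin φ)
    hr.1 hr.2 (Real.sin_sq_add_cos_sq θ)
    (Real.sin_pos_of_pos_of_lt_pi hθ.1 hθ.2) (Real.sin_pos_of_pos_of_lt_pi hφ.1 hφ.2)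
    (Real.cos_le_one θ) (Real.neg_one_le_cos θ) (Real.cos_le_one φ) (Real.neg_one_le_cos φ)
end

section
/- There exists a constant c > 0 such that for all s ∈ (0, log(4/3)), all r ∈ (0, 1/2), and all θ, φ ∈ (0, π), one has | (4/(π·r))·Σ_{n=1}^∞ sin(n·θ)·sin(n·φ)·sinh(n·s)·r^n/(1 + r^{2n}) − (4/π)·sinh(s)·sin(θ)·sin(φ) | ≤ c·r·s·sin(θ)·sin(φ). (In particular the series converges absolutely for these parameter values.) -/
open Real

lemma aux_abs_sin_nat_mul_le (x : ℝ) : ∀ n : ℕ, |Real.sin (n * x)| ≤ n * |Real.sin x| := by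
  intro n
  induction n with
  | zero => simp
  | succ n ih =>
    have h : ((n:ℝ)+1) * x = n * x + x := by ring
    push_cast
    rw [h, Real.sin_add]
    calc |Real.sin (n*x) * Real.cos x + Real.cos (n*x) * Real.sin x|
        ≤ |Real.sin (n*x) * Real.cos x| + |Real.cos (n*x) * Real.sin x| := abs_add_le _ _
      _ ≤ |Real.sin (n*x)| * 1 + 1 * |Real.sin x| := by
          rw [abs_mul, abs_mul]
          gcongr <;> [exact Real.abs_cos_le_one x; exact Real.abs_cos_le_one _]
      _ ≤ (n:ℝ) * |Real.sin x| + 1 * |Real.sin x| := by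
          rw [mul_one]; gcongr
      _ = ((n:ℝ)+1) * |Real.sin x| := by ring

lemma aux_sinh_le (x : ℝ) (hx : 0 ≤ x) : Real.sinh x ≤ x * Real.exp x := by
  have h1 : (1 : ℝ) - 2*x ≤ Real.exp (-(2*x)) := by
    have := Real.add_one_le_exp (-(2*x)); linarith
  have h3 : Real.exp (2*x) = Real.exp x * Real.exp x := by
    rw [← Real.exp_add]; ring_nf
  have hp := Real.exp_pos x
  have hp2 := Real.exp_pos (2*x)
  rw [Real.sinh_eq]
  have hinv : Real.exp (-x) = 1 / Real.exp x := by
    rw [Real.exp_neg]; exact (inv_eq_one_div _)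
  rw [hinv]
  rw [div_le_iff₀ (by positivity : (0:ℝ) < 2)]
  have h2 : Real.exp (-(2*x)) * Real.exp (2*x) = 1 := by
    rw [← Real.exp_add]; simp
  have key : (1 - 2*x) * Real.exp (2*x) ≤ 1 := by
    nlinarith [mul_le_mul_of_nonneg_right h1 hp2.le]
  have h4 : (1/Real.exp x) * Real.exp x = 1 := by field_simp
  have hmul : (Real.exp x - 1/Real.exp x) * Real.exp x ≤ (x * Real.exp x * 2) * Real.exp x := by
    nlinarith [key]
  exact le_of_mul_le_mul_right hmul hp

set_option maxHeartbeats 1000000 in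
/-- Estimate for the exact (separation-of-variables) Poisson kernel of the
half-annulus `{r < |z| < 1, Im z > 0}` (Lemma giving estimate (B) in
Lawler–Werner, "The Brownian loop soup"): the series
`(4/(πr)) Σ_{n≥1} sin(nθ) sin(nφ) sinh(ns) rⁿ/(1+r^{2n})`
converges absolutely and differs from `(4/π) sinh s sin θ sin φ`
by at most `c r s sin θ sin φ`. -/
theorem bubble_poisson_kernel_half_annulus_estimate :
    ∃ c : ℝ, 0 < c ∧ ∀ s r θ φ : ℝ, s ∈ Set.Ioo (0 : ℝ) (Real.log (4/3)) →
      r ∈ Set.Ioo (0 : ℝ) (1/2) →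
      θ ∈ Set.Ioo (0 : ℝ) π → φ ∈ Set.Ioo (0 : ℝ) π →
      Summable (fun n : ℕ =>
        |Real.sin ((n+1) * θ) * Real.sin ((n+1) * φ) * Real.sinh ((n+1) * s) *
          r^(n+1) / (1 + r^(2*(n+1)))|) ∧
      |(4/(π * r)) * ∑' n : ℕ,
          Real.sin ((n+1) * θ) * Real.sin ((n+1) * φ) * Real.sinh ((n+1) * s) *
            r^(n+1) / (1 + r^(2*(n+1)))
        - (4/π) * Real.sinh s * Real.sin θ * Real.sin φ|
      ≤ c * r * s * Real.sin θ * Real.sin φ := by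
  have hπ : (0:ℝ) < π := Real.pi_pos
  -- the absolute constant
  set K : ℝ := ∑' n : ℕ, ((n:ℝ)+2)^3 * (2/3)^n with hK
  have hKsum : Summable (fun n : ℕ => ((n:ℝ)+2)^3 * (2/3)^n) := by
    have base : Summable (fun n : ℕ => ((n:ℝ))^3 * (2/3)^n) :=
      summable_pow_mul_geometric_of_norm_lt_one 3 (by rw [Real.norm_eq_abs, abs_of_pos (by norm_num : (0:ℝ) < 2/3)]; norm_num)
    have h2 := (summable_nat_add_iff (f := fun n : ℕ => ((n:ℝ))^3 * (2/3)^n) 2).2 base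
    exact ((h2.mul_left (9/4)).congr (fun n => by push_cast; ring))
  have hK0 : 0 ≤ K := tsum_nonneg (fun n => by positivity)
  refine ⟨1 + 8/(3*π) + (64/(9*π)) * K, by positivity, ?_⟩
  intro s r θ φ hsI hrI hθI hφI
  obtain ⟨hs, hs2⟩ := hsI
  obtain ⟨hr, hr2⟩ := hrI
  have hsθ : 0 < Real.sin θ := Real.sin_pos_of_pos_of_lt_pi hθI.1 hθI.2
  have hsφ : 0 < Real.sin φ := Real.sin_pos_of_pos_of_lt_pi hφI.1 hφI.2
  have hsθ' : 0 ≤ Real.sin θ := hsθ.le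
  have hsφ' : 0 ≤ Real.sin φ := hsφ.le
  have hexp : Real.exp s ≤ 4/3 := by
    have := Real.exp_le_exp.2 hs2.le
    rwa [Real.exp_log (by norm_num : (0:ℝ) < 4/3)] at this
  set f : ℕ → ℝ := fun n : ℕ =>
      Real.sin ((n+1) * θ) * Real.sin ((n+1) * φ) * Real.sinh ((n+1) * s) *
        r^(n+1) / (1 + r^(2*(n+1))) with hf
  -- pointwise bound
  have hbound : ∀ n : ℕ, |f n| ≤
      Real.sin θ * Real.sin φ * s * (((n:ℝ)+1)^3 * ((4/3)*r)^(n+1)) := by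
    intro n
    have hd : (1:ℝ) ≤ 1 + r^(2*(n+1)) := le_add_of_nonneg_right (by positivity)
    have h0 : |f n| ≤ |Real.sin ((n+1)*θ) * Real.sin ((n+1)*φ) * Real.sinh ((n+1)*s) * r^(n+1)| := by
      rw [hf]
      simp only []
      rw [abs_div, abs_of_pos (by positivity : (0:ℝ) < 1 + r^(2*(n+1)))]
      exact div_le_self (abs_nonneg _) hd
    have h1 : |Real.sin (((n:ℝ)+1)*θ)| ≤ ((n:ℝ)+1) * Real.sin θ := by
      have h := aux_abs_sin_nat_mul_le θ (n+1)
      push_cast at h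
      rwa [abs_of_pos hsθ] at h
    have h2 : |Real.sin (((n:ℝ)+1)*φ)| ≤ ((n:ℝ)+1) * Real.sin φ := by
      have h := aux_abs_sin_nat_mul_le φ (n+1)
      push_cast at h
      rwa [abs_of_pos hsφ] at h
    have h3 : Real.sinh (((n:ℝ)+1)*s) ≤ ((n:ℝ)+1)*s*(4/3:ℝ)^(n+1) := by
      have ha := aux_sinh_le (((n:ℝ)+1)*s) (by positivity)
      have hb : Real.exp (((n:ℝ)+1)*s) ≤ (4/3:ℝ)^(n+1) := by
        have he : Real.exp (((n:ℝ)+1)*s) = (Real.exp s)^(n+1) := by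
          rw [← Real.exp_nat_mul]; push_cast; ring_nf
        rw [he]
        exact pow_le_pow_left₀ (Real.exp_nonneg s) hexp _
      calc Real.sinh (((n:ℝ)+1)*s) ≤ ((n:ℝ)+1)*s * Real.exp (((n:ℝ)+1)*s) := ha
        _ ≤ ((n:ℝ)+1)*s*(4/3:ℝ)^(n+1) := by
            exact mul_le_mul_of_nonneg_left hb (by positivity)
    have hsinh0 : 0 ≤ Real.sinh (((n:ℝ)+1)*s) := Real.sinh_nonneg_iff.2 (by positivity)
    calc |f n| ≤ |Real.sin ((n+1)*θ) * Real.sin ((n+1)*φ) * Real.sinh ((n+1)*s) * r^(n+1)| := h0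
      _ = |Real.sin (((n:ℝ)+1)*θ)| * |Real.sin (((n:ℝ)+1)*φ)| * Real.sinh (((n:ℝ)+1)*s) * r^(n+1) := by
          rw [abs_mul, abs_mul, abs_mul, abs_of_nonneg hsinh0,
            abs_of_nonneg (by positivity : (0:ℝ) ≤ r^(n+1))]
      _ ≤ (((n:ℝ)+1) * Real.sin θ) * (((n:ℝ)+1) * Real.sin φ) *
            (((n:ℝ)+1)*s*(4/3:ℝ)^(n+1)) * r^(n+1) := by
          have c1 : |Real.sin (((n:ℝ)+1)*θ)| * |Real.sin (((n:ℝ)+1)*φ)|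
              ≤ (((n:ℝ)+1) * Real.sin θ) * (((n:ℝ)+1) * Real.sin φ) :=
            mul_le_mul h1 h2 (abs_nonneg _) (by positivity)
          have c2 := mul_le_mul c1 h3 hsinh0 (by positivity)
          exact mul_le_mul_of_nonneg_right c2 (by positivity)
      _ = Real.sin θ * Real.sin φ * s * (((n:ℝ)+1)^3 * ((4/3)*r)^(n+1)) := by
          rw [mul_pow]; ring
  -- summability of the bound
  have hq : |(4/3:ℝ)*r| < 1 := by
    rw [abs_of_pos (by positivity)]; linarith
  have hsum3 : Summable (fun n : ℕ => ((n:ℝ))^3 * ((4/3)*r)^n) :=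
    summable_pow_mul_geometric_of_norm_lt_one 3 (by rwa [Real.norm_eq_abs])
  have hsumB : Summable (fun n : ℕ =>
      Real.sin θ * Real.sin φ * s * (((n:ℝ)+1)^3 * ((4/3)*r)^(n+1))) := by
    apply Summable.mul_left
    have h1 := (summable_nat_add_iff (f := fun n : ℕ => ((n:ℝ))^3 * ((4/3)*r)^n) 1).2 hsum3
    exact h1.congr (fun n => by push_cast; ring)
  have habs : Summable (fun n : ℕ => |f n|) :=
    Summable.of_nonneg_of_le (fun n => abs_nonneg _) hbound hsumB
  have hsumf : Summable f := summable_abs_iff.mp habs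
  constructor
  · exact habs
  -- the estimate
  have hsplit : ∑' n, f n = f 0 + ∑' n, f (n+1) := Summable.tsum_eq_zero_add hsumf
  have hf0 : f 0 = Real.sin θ * Real.sin φ * Real.sinh s * r / (1 + r^2) := by
    rw [hf]; norm_num
  -- bound on the tail
  have htail : ∀ n : ℕ, |f (n+1)| ≤
      Real.sin θ * Real.sin φ * s * r^2 * (16/9) * (((n:ℝ)+2)^3 * (2/3)^n) := by
    intro n
    have h := hbound (n+1)
    have hq2 : ((4/3:ℝ)*r)^(n+1+1) ≤ (16/9)*r^2*(2/3:ℝ)^n := by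
      have e1 : ((4/3:ℝ)*r)^(n+1+1) = (16/9)*r^2 * ((4/3)*r)^n := by ring
      have e2 : ((4/3:ℝ)*r)^n ≤ (2/3:ℝ)^n :=
        pow_le_pow_left₀ (by positivity) (by linarith) n
      rw [e1]
      exact mul_le_mul_of_nonneg_left e2 (by positivity)
    calc |f (n+1)| ≤ Real.sin θ * Real.sin φ * s * ((((n+1:ℕ):ℝ)+1)^3 * ((4/3)*r)^(n+1+1)) := h
      _ ≤ Real.sin θ * Real.sin φ * s * ((((n:ℝ))+2)^3 * ((16/9)*r^2*(2/3:ℝ)^n)) := by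
          push_cast
          have : (((n:ℝ))+1+1)^3 * ((4/3)*r)^(n+1+1) ≤ (((n:ℝ))+2)^3 * ((16/9)*r^2*(2/3:ℝ)^n) := by
            have h3 : (((n:ℝ))+1+1)^3 = (((n:ℝ))+2)^3 := by ring
            rw [h3]
            exact mul_le_mul_of_nonneg_left hq2 (by positivity)
          exact mul_le_mul_of_nonneg_left this (by positivity)
      _ = Real.sin θ * Real.sin φ * s * r^2 * (16/9) * (((n:ℝ)+2)^3 * (2/3)^n) := by ring
  have htsumtail : Summable (fun n : ℕ => |f (n+1)|) :=
    (summable_nat_add_iff (f := fun n : ℕ => |f n|) 1).2 habs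
  have hTabs : |∑' n, f (n+1)| ≤ Real.sin θ * Real.sin φ * s * r^2 * (16/9) * K := by
    have hbsum : Summable (fun n : ℕ =>
        Real.sin θ * Real.sin φ * s * r^2 * (16/9) * (((n:ℝ)+2)^3 * (2/3)^n)) :=
      hKsum.mul_left _
    calc |∑' n, f (n+1)| ≤ ∑' n, |f (n+1)| := by
          have := norm_tsum_le_tsum_norm (f := fun n : ℕ => f (n+1)) (by simpa [Real.norm_eq_abs] using htsumtail)
          simpa [Real.norm_eq_abs] using this
      _ ≤ ∑' n : ℕ, Real.sin θ * Real.sin φ * s * r^2 * (16/9) * (((n:ℝ)+2)^3 * (2/3)^n) :=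
          Summable.tsum_le_tsum htail htsumtail hbsum
      _ = Real.sin θ * Real.sin φ * s * r^2 * (16/9) * K := tsum_mul_left
  -- sinh bound
  have hsinhs : Real.sinh s ≤ (4/3)*s := by
    calc Real.sinh s ≤ s * Real.exp s := aux_sinh_le s hs.le
      _ ≤ s * (4/3) := mul_le_mul_of_nonneg_left hexp hs.le
      _ = (4/3)*s := by ring
  have hsinh0 : 0 ≤ Real.sinh s := Real.sinh_nonneg_iff.2 hs.le
  -- main algebraic identity
  have hmain : 4/(π*r) * (∑' n, f n) - (4/π)*Real.sinh s*Real.sin θ*Real.sin φ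
      = -((4/π)*Real.sinh s*Real.sin θ*Real.sin φ*(r^2/(1+r^2)))
        + 4/(π*r) * ∑' n, f (n+1) := by
    rw [hsplit, hf0]
    have h1r : (0:ℝ) < 1 + r^2 := by positivity
    field_simp
    ring
  rw [hmain]
  have hE1 : |(4/π)*Real.sinh s*Real.sin θ*Real.sin φ*(r^2/(1+r^2))|
      ≤ 8/(3*π) * r * s * Real.sin θ * Real.sin φ := by
    have h1r : (0:ℝ) < 1 + r^2 := by positivity
    have hnn : 0 ≤ (4/π)*Real.sinh s*Real.sin θ*Real.sin φ*(r^2/(1+r^2)) := by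
      apply mul_nonneg
      apply mul_nonneg
      apply mul_nonneg
      exact mul_nonneg (by positivity) hsinh0
      exact hsθ'
      exact hsφ'
      positivity
    rw [abs_of_nonneg hnn]
    have hfrac : r^2/(1+r^2) ≤ r * (1/2) := by
      have h1 : r^2/(1+r^2) ≤ r^2 := div_le_self (by positivity) (by nlinarith)
      nlinarith
    calc (4/π)*Real.sinh s*Real.sin θ*Real.sin φ*(r^2/(1+r^2))
        ≤ (4/π)*((4/3)*s)*Real.sin θ*Real.sin φ*(r*(1/2)) := by
          apply mul_le_mul
          · apply mul_le_mul_of_nonneg_right _ hsφ'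
            apply mul_le_mul_of_nonneg_right _ hsθ'
            exact mul_le_mul_of_nonneg_left hsinhs (by positivity)
          · exact hfrac
          · positivity
          · positivity
      _ = 8/(3*π) * r * s * Real.sin θ * Real.sin φ := by
          field_simp; ring
  have hE2 : |4/(π*r) * ∑' n, f (n+1)| ≤ (64/(9*π)) * K * r * s * Real.sin θ * Real.sin φ := by
    rw [abs_mul, abs_of_pos (by positivity : (0:ℝ) < 4/(π*r))]
    calc 4/(π*r) * |∑' n, f (n+1)|
        ≤ 4/(π*r) * (Real.sin θ * Real.sin φ * s * r^2 * (16/9) * K) :=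
          mul_le_mul_of_nonneg_left hTabs (by positivity)
      _ = (64/(9*π)) * K * r * s * Real.sin θ * Real.sin φ := by
          field_simp; ring
  calc |(-((4/π)*Real.sinh s*Real.sin θ*Real.sin φ*(r^2/(1+r^2)))
        + 4/(π*r) * ∑' n, f (n+1))|
      ≤ |(4/π)*Real.sinh s*Real.sin θ*Real.sin φ*(r^2/(1+r^2))|
        + |4/(π*r) * ∑' n, f (n+1)| := by
        refine (abs_add_le _ _).trans ?_
        rw [abs_neg]
    _ ≤ 8/(3*π) * r * s * Real.sin θ * Real.sin φ
        + (64/(9*π)) * K * r * s * Real.sin θ * Real.sin φ := add_le_add hE1 hE2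
    _ ≤ (1 + 8/(3*π) + (64/(9*π)) * K) * r * s * Real.sin θ * Real.sin φ := by
        have hX : 0 < r * s * Real.sin θ * Real.sin φ :=
          mul_pos (mul_pos (mul_pos hr hs) hsθ) hsφ
        nlinarith [hX]
end

section
/- Let K ⊆ ℂ be a nonempty compact set and suppose there exist ε > 0 and C < ∞ such that for every δ ∈ (0,1], the area (two-dimensional Lebesgue measure) of {z ∈ ℂ : dist(z, K) ≤ δ} is at most C·δ^ε. Then ∫ log(1/dist(z, K)) dA(z), taken over the set {z ∈ ℂ : 0 < dist(z, K) ≤ 1}, is finite. -/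
open MeasureTheory Metric

/-- If a nonempty compact set `K ⊆ ℂ` satisfies the Minkowski-type bound
`area{z : dist(z,K) ≤ δ} ≤ C δ^ε` for all `δ ∈ (0,1]`, then
`∫ log(1/dist(z,K)) dA(z)` over `{z : 0 < dist(z,K) ≤ 1}` is finite. -/
theorem integrable_log_inv_dist_of_minkowski_bound
    (K : Set ℂ) (hK : IsCompact K) (hne : K.Nonempty)
    (ε : ℝ) (hε : 0 < ε) (C : ℝ)
    (hbound : ∀ δ ∈ Set.Ioc (0:ℝ) 1,
      volume {z : ℂ | Metric.infDist z K ≤ δ} ≤ ENNReal.ofReal (C * δ ^ ε)) :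
    ∫⁻ z in {z : ℂ | 0 < Metric.infDist z K ∧ Metric.infDist z K ≤ 1},
        ENNReal.ofReal (Real.log (1 / Metric.infDist z K)) ∂volume < ⊤ := by
  set d : ℂ → ℝ := fun z => Metric.infDist z K with hd
  set A : ℕ → Set ℂ := fun n => {z | (1/2:ℝ)^(n+1) < d z ∧ d z ≤ (1/2:ℝ)^n} with hA
  set C' : ℝ := max C 0 with hC'
  have hC'0 : 0 ≤ C' := le_max_right _ _
  -- the domain is contained in the union of dyadic annuli
  have hsub : {z : ℂ | 0 < d z ∧ d z ≤ 1} ⊆ ⋃ n : ℕ, A n := by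
    intro z hz
    obtain ⟨hz0, hz1⟩ := hz
    have hex : ∃ n : ℕ, (1/2:ℝ)^n < d z :=
      exists_pow_lt_of_lt_one hz0 (by norm_num)
    classical
    set n0 := Nat.find hex with hn0
    have hP : (1/2:ℝ)^n0 < d z := Nat.find_spec hex
    have h0 : n0 ≠ 0 := by
      intro h
      rw [h] at hP
      simp at hP
      linarith
    obtain ⟨m, hm⟩ := Nat.exists_eq_succ_of_ne_zero h0
    refine Set.mem_iUnion.2 ⟨m, ?_, ?_⟩
    · rw [show m + 1 = n0 from hm.symm]; exact hP
    · have := Nat.find_min hex (m := m) (by omega)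
      exact not_lt.mp this
  have hdm : Measurable d := (Metric.continuous_infDist_pt K).measurable
  -- bound the integral over each annulus
  have key : ∀ n : ℕ, ∫⁻ z in A n, ENNReal.ofReal (Real.log (1 / d z)) ∂volume
      ≤ ENNReal.ofReal (((n:ℝ)+1) * Real.log 2 * (C' * ((1/2:ℝ)^ε)^n)) := by
    intro n
    have hbd : ∫⁻ z in A n, ENNReal.ofReal (Real.log (1 / d z)) ∂volume
        ≤ ∫⁻ _ in A n, ENNReal.ofReal (((n:ℝ)+1) * Real.log 2) ∂volume := by
      apply setLIntegral_mono measurable_const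
      intro z hz
      apply ENNReal.ofReal_le_ofReal
      have h1 : (1/2:ℝ)^(n+1) < d z := hz.1
      have h2 : 0 < d z := lt_trans (by positivity) h1
      have : 1 / d z ≤ 2 ^ (n+1) := by
        rw [div_le_iff₀ h2]
        rw [show (2:ℝ)^(n+1) * d z = d z * 2^(n+1) by ring]
        rw [← div_le_iff₀ (by positivity)]
        rw [one_div, ← inv_pow]
        exact le_of_lt (by rw [show ((2:ℝ))⁻¹ = 1/2 by norm_num]; exact h1)
      calc Real.log (1 / d z) ≤ Real.log (2 ^ (n+1)) :=
            Real.log_le_log (by positivity) this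
        _ = ((n:ℝ)+1) * Real.log 2 := by
            rw [Real.log_pow]; push_cast; ring
    rw [setLIntegral_const] at hbd
    refine hbd.trans ?_
    have hvol : volume (A n) ≤ ENNReal.ofReal (C' * ((1/2:ℝ)^ε)^n) := by
      have hsub2 : A n ⊆ {z : ℂ | d z ≤ (1/2:ℝ)^n} := fun z hz => hz.2
      have hmem : (1/2:ℝ)^n ∈ Set.Ioc (0:ℝ) 1 := by
        constructor
        · positivity
        · exact pow_le_one₀ (by norm_num) (by norm_num)
      calc volume (A n) ≤ volume {z : ℂ | d z ≤ (1/2:ℝ)^n} := measure_mono hsub2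
        _ ≤ ENNReal.ofReal (C * ((1/2:ℝ)^n) ^ ε) := hbound _ hmem
        _ ≤ ENNReal.ofReal (C' * ((1/2:ℝ)^ε)^n) := by
            apply ENNReal.ofReal_le_ofReal
            have heq : ((1/2:ℝ)^n) ^ ε = ((1/2:ℝ)^ε)^n := by
              rw [← Real.rpow_natCast (1/2:ℝ) n, ← Real.rpow_mul (by norm_num),
                mul_comm, Real.rpow_mul (by norm_num), Real.rpow_natCast]
            rw [heq]
            apply mul_le_mul_of_nonneg_right (le_max_left _ _)
            positivity
    calc ENNReal.ofReal (((n:ℝ)+1) * Real.log 2) * volume (A n)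
        ≤ ENNReal.ofReal (((n:ℝ)+1) * Real.log 2) * ENNReal.ofReal (C' * ((1/2:ℝ)^ε)^n) :=
          mul_le_mul_right hvol _
      _ = ENNReal.ofReal (((n:ℝ)+1) * Real.log 2 * (C' * ((1/2:ℝ)^ε)^n)) := by
          rw [← ENNReal.ofReal_mul]
          positivity
  -- the series converges
  have hr : |(1/2:ℝ)^ε| < 1 := by
    rw [abs_of_nonneg (by positivity)]
    exact Real.rpow_lt_one (by norm_num) (by norm_num) hε
  have hsum : Summable (fun n : ℕ => ((n:ℝ)+1) * Real.log 2 * (C' * ((1/2:ℝ)^ε)^n)) := by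
    have h1 : Summable (fun n : ℕ => (n:ℝ) * ((1/2:ℝ)^ε)^n) := by
      have := summable_pow_mul_geometric_of_norm_lt_one (R := ℝ) 1
        (r := (1/2:ℝ)^ε) (by rwa [Real.norm_eq_abs])
      simpa using this
    have h2 : Summable (fun n : ℕ => ((1/2:ℝ)^ε)^n) :=
      summable_geometric_of_abs_lt_one hr
    have h3 : Summable (fun n : ℕ => ((n:ℝ)+1) * ((1/2:ℝ)^ε)^n) := by
      have := h1.add h2
      convert this using 2 with n
      ring
    have := h3.mul_right (Real.log 2 * C')
    convert this using 2 with n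
    · rfl
    · ring
  calc ∫⁻ z in {z : ℂ | 0 < d z ∧ d z ≤ 1},
          ENNReal.ofReal (Real.log (1 / d z)) ∂volume
      ≤ ∫⁻ z in ⋃ n : ℕ, A n, ENNReal.ofReal (Real.log (1 / d z)) ∂volume :=
        lintegral_mono_set hsub
    _ ≤ ∑' n : ℕ, ∫⁻ z in A n, ENNReal.ofReal (Real.log (1 / d z)) ∂volume :=
        lintegral_iUnion_le _ _
    _ ≤ ∑' n : ℕ, ENNReal.ofReal (((n:ℝ)+1) * Real.log 2 * (C' * ((1/2:ℝ)^ε)^n)) :=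
        ENNReal.tsum_le_tsum key
    _ = ENNReal.ofReal (∑' n : ℕ, ((n:ℝ)+1) * Real.log 2 * (C' * ((1/2:ℝ)^ε)^n)) := by
        rw [ENNReal.ofReal_tsum_of_nonneg (fun n => by positivity) hsum]
    _ < ⊤ := ENNReal.ofReal_lt_top
end

section
/- Let X be a random variable with values in [0, ∞] such that E[X] = ∞. Suppose that for every integer m ≥ 1 the following stochastic domination holds: if X_1, …, X_{2^m} are independent random variables (on some probability space) each with the same distribution as X, then for every a ∈ [0, ∞), P(X > a) ≥ P( 2^{−m}·(X_1 + ⋯ + X_{2^m}) > a ). Then P(X = ∞) = 1. -/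
open MeasureTheory ProbabilityTheory
open MeasureTheory ProbabilityTheory Function Set

lemma my_pi_eval_apply {ι : Type*} [Fintype ι] {α : ι → Type*} [∀ i, MeasurableSpace (α i)]
    (μ : ∀ i, Measure (α i)) [∀ i, IsProbabilityMeasure (μ i)] (i : ι)
    {s : Set (α i)} (_hs : MeasurableSet s) :
    Measure.pi μ (eval i ⁻¹' s) = μ i s := by
  classical
  rw [Set.eval_preimage, Measure.pi_pi]
  rw [Fintype.prod_eq_single i]
  · rw [Function.update_self]
  · intro j hj
    rw [Function.update_of_ne hj]
    simp

lemma my_pi_map_eval {ι : Type*} [Fintype ι] {α : ι → Type*} [∀ i, MeasurableSpace (α i)]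
    (μ : ∀ i, Measure (α i)) [∀ i, IsProbabilityMeasure (μ i)] (i : ι) :
    (Measure.pi μ).map (eval i) = μ i := by
  ext s hs
  rw [Measure.map_apply (measurable_pi_apply i) hs, my_pi_eval_apply μ i hs]

lemma my_pi_iIndepFun {ι : Type*} [Fintype ι] {α : ι → Type*} [m : ∀ i, MeasurableSpace (α i)]
    (μ : ∀ i, Measure (α i)) [∀ i, IsProbabilityMeasure (μ i)] :
    iIndepFun (m := m) (fun i (x : ∀ j, α j) => x i) (Measure.pi μ) := by
  classical
  rw [iIndepFun_iff_measure_inter_preimage_eq_mul]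
  intro S sets hsets
  have hset : (⋂ i ∈ S, (fun x : ∀ j, α j => x i) ⁻¹' sets i)
      = Set.pi Set.univ (fun i => if i ∈ S then sets i else Set.univ) := by
    ext x
    simp only [Set.mem_iInter, Set.mem_preimage, Set.mem_pi, Set.mem_univ, true_implies]
    constructor
    · intro h i
      split_ifs with hi
      · exact h i hi
      · trivial
    · intro h i hi
      have := h i
      rwa [if_pos hi] at this
  rw [hset, Measure.pi_pi]
  have h1 : ∀ i, μ i (if i ∈ S then sets i else Set.univ)
      = if i ∈ S then μ i (sets i) else 1 := by
    intro i; split_ifs <;> simp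
  simp_rw [h1]
  rw [Finset.prod_ite_mem Finset.univ S, Finset.univ_inter]
  refine Finset.prod_congr rfl fun i hi => ?_
  rw [my_pi_eval_apply μ i (hsets i hi)]

lemma my_avg_bound (μX : Measure ENNReal) [IsProbabilityMeasure μX] (n k m : ℕ)
    (hI : ((n : ENNReal) + 1) < ∫⁻ y, min y (k : ENNReal) ∂μX)
    (hIk : ∫⁻ y, min y (k : ENNReal) ∂μX ≤ (k : ENNReal)) :
    (1 : ENNReal) ≤ Measure.pi (fun _ : Fin (2^m) => μX)
        {x | (n : ENNReal) < (∑ i, x i) / (2^m : ENNReal)}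
      + ENNReal.ofReal (((k:ℝ)^2 /
          ((∫⁻ y, min y (k : ENNReal) ∂μX).toReal - ((n:ℝ)+1))^2) / 2^m) := by
  set P := Measure.pi (fun _ : Fin (2^m) => μX) with hP
  haveI : IsProbabilityMeasure P := by rw [hP]; infer_instance
  set I := ∫⁻ y, min y (k : ENNReal) ∂μX with hIdef
  have hItop : I ≠ ⊤ := (hIk.trans_lt (ENNReal.natCast_lt_top k)).ne
  set mk := I.toReal with hmk
  set t : ℝ := mk - ((n:ℝ)+1) with ht
  have hnmk : (n:ℝ) + 1 < mk := by
    have h := (ENNReal.toReal_lt_toReal (by simp) hItop).mpr hI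
    simpa [ENNReal.toReal_add] using h
  have htpos : 0 < t := by rw [ht]; linarith
  set Z : Fin (2^m) → (Fin (2^m) → ENNReal) → ℝ :=
    fun i x => (min (x i) (k:ENNReal)).toReal with hZ
  have hZmeas : ∀ i, Measurable (Z i) :=
    fun i => ((measurable_pi_apply i).min measurable_const).ennreal_toReal
  have hZnonneg : ∀ i x, 0 ≤ Z i x := fun i x => ENNReal.toReal_nonneg
  have hZle : ∀ i x, Z i x ≤ (k:ℝ) := by
    intro i x
    calc (min (x i) (k:ENNReal)).toReal
        ≤ ((k:ENNReal)).toReal := ENNReal.toReal_mono (by simp) (min_le_right _ _)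
      _ = (k:ℝ) := by simp
  have hZmem : ∀ i, MemLp (Z i) 2 P := fun i =>
    MemLp.of_bound (hZmeas i).aestronglyMeasurable (k:ℝ)
      (ae_of_all _ fun x => by
        rw [Real.norm_eq_abs, abs_of_nonneg (hZnonneg i x)]; exact hZle i x)
  have hZint : ∀ i, Integrable (Z i) P := fun i => (hZmem i).integrable one_le_two
  have hmap : ∀ i : Fin (2^m), P.map (fun x => x i) = μX := fun i => my_pi_map_eval _ i
  have hZmean : ∀ i, ∫ x, Z i x ∂P = mk := by
    intro i
    rw [integral_toReal (((measurable_pi_apply i).min measurable_const).aemeasurable)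
      (ae_of_all _ fun x => (min_le_right _ _).trans_lt (ENNReal.natCast_lt_top k))]
    rw [hmk, hIdef]
    congr 1
    calc ∫⁻ x, min (x i) (k:ENNReal) ∂P
        = ∫⁻ y, min y (k:ENNReal) ∂(P.map (fun x => x i)) :=
          (lintegral_map (f := fun y => min y (k:ENNReal))
            (measurable_id.min measurable_const) (measurable_pi_apply i)).symm
      _ = ∫⁻ y, min y (k:ENNReal) ∂μX := by rw [hmap i]
  have hZvar : ∀ i, variance (Z i) P ≤ (k:ℝ)^2 := by
    intro i
    refine (variance_le_expectation_sq (hZmeas i).aestronglyMeasurable).trans ?_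
    calc ∫ x, (Z i x)^2 ∂P ≤ ∫ _x, (k:ℝ)^2 ∂P := by
          refine integral_mono (hZmem i).integrable_sq (integrable_const _) fun x => ?_
          exact pow_le_pow_left₀ (hZnonneg i x) (hZle i x) 2
      _ = (k:ℝ)^2 := by simp
  have hSapp : ∀ x, (∑ i, Z i) x = ∑ i, Z i x := fun x => by simp
  have hSmem : MemLp (∑ i, Z i) 2 P := memLp_finset_sum' _ (fun i _ => hZmem i)
  have hSmean : ∫ x, (∑ i, Z i) x ∂P = 2^m * mk := by
    simp_rw [hSapp]
    rw [integral_finset_sum _ (fun i _ => hZint i)]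
    simp [hZmean, mul_comm]
  have hindep : iIndepFun (m := fun _ : Fin (2^m) => (inferInstance : MeasurableSpace ℝ)) Z P := by
    have h := (my_pi_iIndepFun (fun _ : Fin (2^m) => μX)).comp
      (fun _ (y : ENNReal) => (min y (k:ENNReal)).toReal)
      (fun _ => (measurable_id.min measurable_const).ennreal_toReal)
    exact h
  have hSvar : variance (∑ i, Z i) P ≤ 2^m * (k:ℝ)^2 := by
    rw [IndepFun.variance_sum (fun i _ => hZmem i)
      (fun i _ j _ hij => hindep.indepFun hij)]
    calc ∑ i : Fin (2^m), variance (Z i) P ≤ ∑ _i : Fin (2^m), (k:ℝ)^2 :=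
          Finset.sum_le_sum fun i _ => hZvar i
      _ = 2^m * (k:ℝ)^2 := by simp [mul_comm]
  have hcheb := meas_ge_le_variance_div_sq (μ := P) hSmem
    (c := 2^m * t) (by positivity)
  have hincl : {x : Fin (2^m) → ENNReal | ¬ ((n:ENNReal) < (∑ i, x i) / (2^m:ENNReal))}
      ⊆ {x | 2^m * t ≤ |(∑ i, Z i) x - ∫ y, (∑ i, Z i) y ∂P|} := by
    intro x hx
    simp only [Set.mem_setOf_eq, not_lt] at hx
    have h2m0 : ((2:ENNReal)^m) ≠ 0 := by simp
    have h2mtop : ((2:ENNReal)^m) ≠ ⊤ := by simp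
    have hsum : (∑ i, x i) ≤ (n : ENNReal) * 2^m := by
      rw [ENNReal.div_le_iff h2m0 h2mtop] at hx
      exact hx
    have hsumtop : (∑ i, x i) ≠ ⊤ :=
      (hsum.trans_lt (lt_top_iff_ne_top.mpr (ENNReal.mul_ne_top (by simp) (by simp)))).ne
    have hxi : ∀ i, x i ≠ ⊤ := fun i =>
      ((Finset.single_le_sum (fun j _ => zero_le) (Finset.mem_univ i)).trans_lt
        (lt_top_iff_ne_top.mpr hsumtop)).ne
    have hSx : (∑ i, Z i) x ≤ (n:ℝ) * 2^m := by
      rw [hSapp]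
      calc ∑ i, Z i x ≤ ∑ i : Fin (2^m), (x i).toReal :=
            Finset.sum_le_sum fun i _ => ENNReal.toReal_mono (hxi i) (min_le_left _ _)
        _ = (∑ i, x i).toReal := (ENNReal.toReal_sum (fun i _ => hxi i)).symm
        _ ≤ ((n:ENNReal) * 2^m).toReal :=
            ENNReal.toReal_mono (ENNReal.mul_ne_top (by simp) (by simp)) hsum
        _ = (n:ℝ) * 2^m := by simp
    rw [Set.mem_setOf_eq, hSmean]
    have h2mpos : (0:ℝ) < 2^m := by positivity
    have hkey : (∑ i, Z i) x ≤ 2^m * mk - 2^m * t := by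
      have : 2^m * mk - 2^m * t = 2^m * ((n:ℝ)+1) := by rw [ht]; ring
      rw [this]
      nlinarith
    calc (2:ℝ)^m * t ≤ (2^m * mk) - (∑ i, Z i) x := by linarith
      _ ≤ |(∑ i, Z i) x - 2^m * mk| := by
          rw [abs_sub_comm]; exact le_abs_self _
  have hunion : (1:ENNReal) ≤ P {x | (n:ENNReal) < (∑ i, x i)/(2^m:ENNReal)}
      + P {x | 2^m * t ≤ |(∑ i, Z i) x - ∫ y, (∑ i, Z i) y ∂P|} := by
    have hcov : (Set.univ : Set (Fin (2^m) → ENNReal))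
        ⊆ {x | (n:ENNReal) < (∑ i, x i)/(2^m:ENNReal)}
          ∪ {x | 2^m * t ≤ |(∑ i, Z i) x - ∫ y, (∑ i, Z i) y ∂P|} := by
      intro x _
      by_cases hx : (n:ENNReal) < (∑ i, x i)/(2^m:ENNReal)
      · exact Or.inl hx
      · exact Or.inr (hincl hx)
    calc (1:ENNReal) = P Set.univ := measure_univ.symm
      _ ≤ P _ := measure_mono hcov
      _ ≤ _ := measure_union_le _ _
  refine hunion.trans (add_le_add_right ?_ _)
  refine hcheb.trans ?_
  apply ENNReal.ofReal_le_ofReal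
  calc variance (∑ i, Z i) P / (2^m * t)^2
      ≤ (2^m * (k:ℝ)^2) / (2^m*t)^2 := by gcongr
    _ = ((k:ℝ)^2 / t^2)/2^m := by field_simp


/-- If a `[0,∞]`-valued random variable `X` has infinite expectation and, for
every `m ≥ 1`, stochastically dominates the average of `2^m` independent copies
of itself, then `X = ∞` almost surely. -/
theorem ae_eq_top_of_infinite_mean_self_dominating
    {Ω : Type} [MeasureSpace Ω] [IsProbabilityMeasure (ℙ : Measure Ω)]
    (X : Ω → ENNReal) (hX : Measurable X)
    (hmean : ∫⁻ ω, X ω ∂ℙ = ⊤)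
    (hdom : ∀ m : ℕ, 1 ≤ m →
      ∀ (Ω' : Type) (_ : MeasureSpace Ω') (_ : IsProbabilityMeasure (ℙ : Measure Ω'))
        (Y : Fin (2^m) → Ω' → ENNReal),
        (∀ i, Measurable (Y i)) →
        iIndepFun (m := fun _ : Fin (2^m) => (inferInstance : MeasurableSpace ENNReal)) Y ℙ →
        (∀ i, Measure.map (Y i) ℙ = Measure.map X ℙ) →
        ∀ a : ENNReal, a ≠ ⊤ →
          ℙ {ω' | a < (∑ i, Y i ω') / (2^m : ENNReal)} ≤ ℙ {ω | a < X ω}) :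
    ℙ {ω | X ω = ⊤} = 1 := by
  have hXae : AEMeasurable X ℙ := hX.aemeasurable
  haveI : IsProbabilityMeasure (Measure.map X ℙ) := Measure.isProbabilityMeasure_map hXae
  have key : ∀ n : ℕ, ℙ {ω | (n : ENNReal) < X ω} = 1 := by
    intro n
    obtain ⟨k, hk⟩ : ∃ k : ℕ, ((n : ENNReal) + 1) < ∫⁻ ω, min (X ω) (k : ENNReal) ∂ℙ := by
      have hmono : Monotone (fun k : ℕ => fun ω => min (X ω) (k : ENNReal)) := by
        intro a b hab ω
        exact min_le_min le_rfl (by exact_mod_cast hab)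
      have hsup : (⨆ k : ℕ, ∫⁻ ω, min (X ω) (k : ENNReal) ∂ℙ) = ⊤ := by
        rw [← lintegral_iSup (fun k => hX.min measurable_const) hmono]
        have hpt : ∀ ω, (⨆ k : ℕ, min (X ω) (k : ENNReal)) = X ω := by
          intro ω
          refine le_antisymm (iSup_le fun k => min_le_left _ _) ?_
          rcases eq_or_ne (X ω) ⊤ with htop | hfin
          · rw [htop]
            have hmin : ∀ k : ℕ, min (⊤ : ENNReal) (k : ENNReal) = k :=
              fun k => min_eq_right le_top
            simp only [hmin]
            rw [ENNReal.iSup_natCast]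
          · obtain ⟨k, hk⟩ := ENNReal.exists_nat_gt hfin
            exact le_iSup_of_le k (le_of_eq (min_eq_left hk.le).symm)
        simp_rw [hpt]
        exact hmean
      have h2 : ((n : ENNReal) + 1) < ⨆ k : ℕ, ∫⁻ ω, min (X ω) (k : ENNReal) ∂ℙ := by
        rw [hsup]
        exact lt_top_iff_ne_top.mpr (by simp)
      exact lt_iSup_iff.mp h2
    have hmapint : ∫⁻ y, min y (k:ENNReal) ∂(Measure.map X ℙ)
        = ∫⁻ ω, min (X ω) (k:ENNReal) ∂ℙ :=
      lintegral_map (f := fun y => min y (k:ENNReal))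
        (measurable_id.min measurable_const) hX
    have hI : ((n : ENNReal) + 1) < ∫⁻ y, min y (k : ENNReal) ∂(Measure.map X ℙ) := by
      rw [hmapint]; exact hk
    have hIk : ∫⁻ y, min y (k : ENNReal) ∂(Measure.map X ℙ) ≤ (k : ENNReal) := by
      calc ∫⁻ y, min y (k : ENNReal) ∂(Measure.map X ℙ)
          ≤ ∫⁻ _y, (k : ENNReal) ∂(Measure.map X ℙ) :=
            lintegral_mono fun y => min_le_right _ _
        _ = (k : ENNReal) := by simp
    have hItop : ∫⁻ y, min y (k : ENNReal) ∂(Measure.map X ℙ) ≠ ⊤ :=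
      (hIk.trans_lt (ENNReal.natCast_lt_top k)).ne
    set t : ℝ := (∫⁻ y, min y (k : ENNReal) ∂(Measure.map X ℙ)).toReal - ((n:ℝ)+1) with ht
    have htpos : 0 < t := by
      have h := (ENNReal.toReal_lt_toReal (by simp) hItop).mpr hI
      rw [ht]
      have h' : (n:ℝ) + 1 < (∫⁻ y, min y (k : ENNReal) ∂(Measure.map X ℙ)).toReal := by
        simpa [ENNReal.toReal_add] using h
      linarith
    have main : ∀ m : ℕ, 1 ≤ m → (1:ENNReal) ≤ ℙ {ω | (n:ENNReal) < X ω}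
        + ENNReal.ofReal (((k:ℝ)^2 / t^2) / 2^m) := by
      intro m hm
      letI : MeasureSpace (Fin (2^m) → ENNReal) := ⟨Measure.pi fun _ => Measure.map X ℙ⟩
      haveI hprob : IsProbabilityMeasure (ℙ : Measure (Fin (2^m) → ENNReal)) := by
        show IsProbabilityMeasure (Measure.pi fun _ : Fin (2^m) => Measure.map X ℙ)
        infer_instance
      have hdom' := hdom m hm (Fin (2^m) → ENNReal) inferInstance hprob
        (fun i x => x i) (fun i => measurable_pi_apply i)
        (my_pi_iIndepFun _) (fun i => my_pi_map_eval _ i) (n : ENNReal) (by simp)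
      have havg := my_avg_bound (Measure.map X ℙ) n k m hI hIk
      rw [ht]
      exact havg.trans (add_le_add hdom' le_rfl)
    refine le_antisymm prob_le_one ?_
    refine ENNReal.le_of_forall_pos_le_add fun ε hε _ => ?_
    obtain ⟨m₀, hm₀⟩ := pow_unbounded_of_one_lt (((k:ℝ)^2/t^2)/(ε:ℝ)) (one_lt_two)
    have hεR : (0:ℝ) < (ε:ℝ) := hε
    have hC : ((k:ℝ)^2/t^2)/2^(m₀+1) ≤ (ε:ℝ) := by
      have h1 : (k:ℝ)^2/t^2 < 2^m₀ * (ε:ℝ) := (div_lt_iff₀ hεR).mp hm₀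
      have h2 : (0:ℝ) < 2^(m₀+1) := by positivity
      rw [div_le_iff₀ h2]
      have h3 : (0:ℝ) < 2^m₀ := by positivity
      calc (k:ℝ)^2/t^2 ≤ 2^m₀ * (ε:ℝ) := h1.le
        _ ≤ (ε:ℝ) * 2^(m₀+1) := by rw [pow_succ]; nlinarith
    have hmain := main (m₀+1) (Nat.le_add_left 1 m₀)
    refine hmain.trans (add_le_add le_rfl ?_)
    rw [← ENNReal.ofReal_coe_nnreal]
    exact ENNReal.ofReal_le_ofReal hC
  have hle : ∀ n : ℕ, ℙ {ω | X ω ≤ (n:ENNReal)} = 0 := by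
    intro n
    have hms : MeasurableSet {ω | (n:ENNReal) < X ω} := measurableSet_lt measurable_const hX
    have hc : {ω | X ω ≤ (n:ENNReal)} = {ω | (n:ENNReal) < X ω}ᶜ := by
      ext ω; simp [not_lt]
    rw [hc, prob_compl_eq_one_sub hms, key n, tsub_self]
  have hne : ℙ {ω | X ω ≠ ⊤} = 0 := by
    refine le_antisymm ?_ zero_le
    have hsub : {ω | X ω ≠ ⊤} ⊆ ⋃ n : ℕ, {ω | X ω ≤ (n:ENNReal)} := by
      intro ω hω
      obtain ⟨n, hn⟩ := ENNReal.exists_nat_gt hω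
      exact Set.mem_iUnion.mpr ⟨n, hn.le⟩
    calc ℙ {ω | X ω ≠ ⊤} ≤ ℙ (⋃ n : ℕ, {ω | X ω ≤ (n:ENNReal)}) := measure_mono hsub
      _ ≤ ∑' n : ℕ, ℙ {ω | X ω ≤ (n:ENNReal)} := measure_iUnion_le _
      _ = 0 := by simp [hle]
  have hms : MeasurableSet {ω | X ω = ⊤} := hX (measurableSet_singleton ⊤)
  exact (prob_compl_eq_zero_iff hms).mp hne
end
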